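/- Let H ⊆ F^2(H_n) ⊗ G be co-invariant under each W_i ⊗ I_G (W the universal model of an admissible g). The following are equivalent: (i) the closed span of (W_α ⊗ I_G)H over α ∈ F_n^+ equals F^2(H_n) ⊗ G; (ii) there is no proper closed subspace N of G with H ⊆ F^2(H_n) ⊗ N; (iii) closure((P_{C1} ⊗ I_G)H) = G (identifying C1 ⊗ G with G); (iv) H^⊥ ∩ G = {0} (with G identified with 1 ⊗ G). -/

import Mathlib

open scoped InnerProductSpace
open Filter

noncomputable section

/-- Words in the free semigroup `F_n^+`, encoded as lists over `Fin n`. -/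
abbrev Word (n : ℕ) := List (Fin n)

/-- The full Fock space tensored with `K`, realized as `ℓ²`-sequences over words with values
in `K`; for `K = ℂ` this is the full Fock space `F²(H_n)` with orthonormal basis `{e_α}`. -/
abbrev FockK (n : ℕ) (K : Type*) [NormedAddCommGroup K] [InnerProductSpace ℂ K] :=
  lp (fun _ : Word n => K) 2

/-- The finite set of words of length `p`. -/
def wordsLen (n p : ℕ) : Finset (Word n) :=
  (Finset.univ : Finset (List.Vector (Fin n) p)).image List.Vector.toList

variable {n : ℕ} {E : Type*} [NormedAddCommGroup E] [InnerProductSpace ℂ E] [CompleteSpace E]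

/-- For a word `α = g_{i₁} ⋯ g_{i_k}`, the operator `X_α = X_{i₁} ⋯ X_{i_k}`. -/
def wordOp (X : Fin n → (E →L[ℂ] E)) (α : Word n) : E →L[ℂ] E := (α.map X).prod

/-- Partial sums `∑_{p < N} ∑_{|α| = p} a_α X_α X_α^*` of the defect series
`Δ_{g⁻¹}(X, X^*)` associated with the coefficients `a` of `g⁻¹`. -/
def deltaPartial (a : Word n → ℝ) (X : Fin n → (E →L[ℂ] E)) (N : ℕ) : E →L[ℂ] E :=
  ∑ p ∈ Finset.range N, ∑ α ∈ wordsLen n p,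
    (a α : ℂ) • (wordOp X α ∘L (wordOp X α).adjoint)

/-!
Every component `h_α` of `h ∈ H` is a nonzero multiple of the vacuum component of `W_α^* h ∈ H`,
so all components of `H` lie in the vacuum space `V = {h_∅ : h ∈ H}`. Since `F² ⊗ N` is closed
and invariant under the `W_i` whenever `N` is closed, this gives (i) ⇒ (ii) ⇒ (iii). Conversely,
`Δ_{g⁻¹}(W, W^*) h = 1 ⊗ h_∅` puts the vacuum vectors `1 ⊗ h_∅` into the closed invariant span,
the shifts `W_α` move them to every `e_α ⊗ h_∅`, and density of `V` gives (i).
Finally (iii) ⇔ (iv) says that `V` is dense iff `V^⊥ = 0`.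
-/

theorem Submodule.dense_iff_forall_inner_eq_zero {𝕜 F : Type*} [RCLike 𝕜] [NormedAddCommGroup F]
    [InnerProductSpace 𝕜 F] [CompleteSpace F] (V : Submodule 𝕜 F) :
    Dense (V : Set F) ↔ ∀ k : F, (∀ v ∈ V, ⟪k, v⟫_𝕜 = 0) → k = 0 := by
  simp only [Submodule.dense_iff_topologicalClosure_eq_top, Submodule.topologicalClosure_eq_top_iff,
    Submodule.eq_bot_iff, Submodule.mem_orthogonal']

theorem lp.map_mem_of_forall_single_mem {ι 𝕜 F : Type*} [DecidableEq ι] {E : ι → Type*}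
    [NormedField 𝕜] [∀ i, NormedAddCommGroup (E i)] [∀ i, NormedSpace 𝕜 (E i)] {p : ENNReal}
    [Fact (1 ≤ p)] (hp : p ≠ ⊤) [NormedAddCommGroup F] [NormedSpace 𝕜 F] (A : lp E p →L[𝕜] F)
    {T : Submodule 𝕜 F} (hT : IsClosed (T : Set F)) (f : lp E p)
    (hf : ∀ i, A (lp.single p i (f i)) ∈ T) : A f ∈ T := by
  refine hT.mem_of_tendsto ((A.continuous.tendsto f).comp (lp.hasSum_single hp f))
    (Eventually.of_forall fun s => ?_)
  rw [Function.comp_apply, map_sum]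
  exact T.sum_mem fun i _ => hf i

section WordOp

variable {F : Type*} [NormedAddCommGroup F] [InnerProductSpace ℂ F]

theorem wordOp_cons (X : Fin n → (F →L[ℂ] F)) (i : Fin n) (α : Word n) :
    wordOp X (i :: α) = X i ∘L wordOp X α := by
  rw [wordOp, List.map_cons, List.prod_cons, ContinuousLinearMap.mul_def, wordOp]

theorem wordOp_append (X : Fin n → (F →L[ℂ] F)) (α β : Word n) :
    wordOp X (α ++ β) = wordOp X α ∘L wordOp X β := by
  rw [wordOp, List.map_append, List.prod_append, ContinuousLinearMap.mul_def, wordOp, wordOp]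

theorem wordOp_mem {X : Fin n → (F →L[ℂ] F)} {T : Submodule ℂ F}
    (hT : ∀ i, ∀ x ∈ T, X i x ∈ T) (α : Word n) {x : F} (hx : x ∈ T) : wordOp X α x ∈ T := by
  induction α with
  | nil => exact hx
  | cons i α ih => exact hT i _ ih

theorem adjoint_wordOp_mem [CompleteSpace F] {X : Fin n → (F →L[ℂ] F)} {T : Submodule ℂ F}
    (hT : ∀ i, ∀ x ∈ T, (X i).adjoint x ∈ T) (α : Word n) {x : F} (hx : x ∈ T) :
    (wordOp X α).adjoint x ∈ T := by
  induction α generalizing x with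
  | nil => simpa [wordOp, ContinuousLinearMap.one_def, ContinuousLinearMap.adjoint_id] using hx
  | cons i α ih =>
    rw [wordOp_cons, ContinuousLinearMap.adjoint_comp]
    exact ih (hT i x hx)

theorem wordOp_mem_topologicalClosure_span (X : Fin n → (F →L[ℂ] F)) (S : Set F) (α : Word n)
    {x : F} (hx : x ∈ (Submodule.span ℂ (⋃ β, wordOp X β '' S)).topologicalClosure) :
    wordOp X α x ∈ (Submodule.span ℂ (⋃ β, wordOp X β '' S)).topologicalClosure := by
  set Sp := Submodule.span ℂ (⋃ β, wordOp X β '' S)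
  have hSp : Sp ≤ Sp.comap (wordOp X α).toLinearMap := by
    rw [Submodule.span_le]
    rintro _ ⟨_, ⟨β, rfl⟩, y, hy, rfl⟩
    change wordOp X α (wordOp X β y) ∈ Sp
    rw [← ContinuousLinearMap.comp_apply, ← wordOp_append]
    exact Submodule.subset_span (Set.mem_iUnion.2 ⟨α ++ β, y, hy, rfl⟩)
  rw [← SetLike.mem_coe, Submodule.topologicalClosure_coe] at hx ⊢
  have hmaps : Set.MapsTo (wordOp X α) (Sp : Set F) Sp := fun y hy => hSp hy
  exact hmaps.closure (wordOp X α).continuous hx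

end WordOp

section Fock

variable {G : Type*} [NormedAddCommGroup G] [InnerProductSpace ℂ G]

def fockTensor (n : ℕ) (N : Submodule ℂ G) : Submodule ℂ (FockK n G) :=
  ⨅ α : Word n, N.comap (lp.evalₗ (fun _ : Word n => G) 2 α)

@[simp]
theorem mem_fockTensor {N : Submodule ℂ G} {f : FockK n G} :
    f ∈ fockTensor n N ↔ ∀ α, (f : ∀ _ : Word n, G) α ∈ N := by
  simp [fockTensor]

theorem isClosed_fockTensor {N : Submodule ℂ G} (hN : IsClosed (N : Set G)) :
    IsClosed (fockTensor n N : Set (FockK n G)) := by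
  rw [fockTensor, Submodule.coe_iInf]
  exact isClosed_iInter fun α => hN.preimage (lp.lipschitzWith_one_eval 2 α).continuous

theorem single_mem_fockTensor {N : Submodule ℂ G} (α : Word n) {k : G} (hk : k ∈ N) :
    (lp.single 2 α k : FockK n G) ∈ fockTensor n N := by
  classical
  refine mem_fockTensor.2 fun β => ?_
  rw [lp.single_apply, Pi.single_apply]
  split_ifs
  · exact hk
  · exact N.zero_mem

def vacuumSpace (H : Submodule ℂ (FockK n G)) : Submodule ℂ G :=
  H.map (lp.evalₗ (𝕜 := ℂ) (fun _ : Word n => G) 2 [])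

theorem dense_vacuumSpace_iff [CompleteSpace G] (H : Submodule ℂ (FockK n G)) :
    Dense (vacuumSpace H : Set G) ↔
      ∀ k : G, (∀ h ∈ H, ⟪(lp.single 2 ([] : Word n) k : FockK n G), h⟫_ℂ = 0) → k = 0 := by
  simp only [Submodule.dense_iff_forall_inner_eq_zero, vacuumSpace, Submodule.mem_map,
    lp.inner_single_left, forall_exists_index, and_imp, forall_apply_eq_imp_iff₂]
  rfl

def IsWeightedShift (b : Word n → ℝ) (W : Fin n → (FockK n G →L[ℂ] FockK n G)) : Prop :=
  ∀ (i : Fin n) (α : Word n) (k : G),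
    W i (lp.single 2 α k) = ((Real.sqrt (b α / b (i :: α)) : ℝ) : ℂ) • lp.single 2 (i :: α) k

variable {b : Word n → ℝ} {W : Fin n → (FockK n G →L[ℂ] FockK n G)}

theorem ofReal_sqrt_div_ne_zero (hb : ∀ α, 0 < b α) (α β : Word n) :
    ((Real.sqrt (b α / b β) : ℝ) : ℂ) ≠ 0 :=
  Complex.ofReal_ne_zero.2 (Real.sqrt_pos.2 (div_pos (hb α) (hb β))).ne'

theorem IsWeightedShift.wordOp_single (hW : IsWeightedShift b W) (hb : ∀ α, 0 < b α)
    (α β : Word n) (k : G) :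
    wordOp W α (lp.single 2 β k) =
      ((Real.sqrt (b β / b (α ++ β)) : ℝ) : ℂ) • lp.single 2 (α ++ β) k := by
  induction α with
  | nil => simp [wordOp, div_self (hb β).ne']
  | cons i α ih =>
    have hratio : b β / b (α ++ β) * (b (α ++ β) / b (i :: (α ++ β))) =
        b β / b (i :: (α ++ β)) := by
      field_simp [(hb (α ++ β)).ne']
    rw [wordOp_cons, ContinuousLinearMap.comp_apply, ih, map_smul, hW, smul_smul,
      ← Complex.ofReal_mul, ← Real.sqrt_mul (div_pos (hb β) (hb _)).le, hratio, List.cons_append]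

theorem IsWeightedShift.map_mem_fockTensor (hW : IsWeightedShift b W) {N : Submodule ℂ G}
    (hN : IsClosed (N : Set G)) (i : Fin n) {f : FockK n G} (hf : f ∈ fockTensor n N) :
    W i f ∈ fockTensor n N :=
  lp.map_mem_of_forall_single_mem (by norm_num) (W i) (isClosed_fockTensor hN) f fun α => by
    rw [hW]
    exact Submodule.smul_mem _ _ (single_mem_fockTensor _ (mem_fockTensor.1 hf α))

theorem IsWeightedShift.adjoint_wordOp_apply_nil [CompleteSpace G] (hW : IsWeightedShift b W)
    (hb : ∀ α, 0 < b α) (α : Word n) (h : FockK n G) :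
    ((wordOp W α).adjoint h : ∀ _ : Word n, G) [] =
      ((Real.sqrt (b [] / b α) : ℝ) : ℂ) • (h : ∀ _ : Word n, G) α := by
  refine ext_inner_left ℂ fun k => ?_
  calc ⟪k, ((wordOp W α).adjoint h : ∀ _ : Word n, G) []⟫_ℂ
      = ⟪wordOp W α (lp.single 2 [] k), h⟫_ℂ := by
        rw [← ContinuousLinearMap.adjoint_inner_right, lp.inner_single_left]
    _ = ((Real.sqrt (b [] / b α) : ℝ) : ℂ) * ⟪k, (h : ∀ _ : Word n, G) α⟫_ℂ := by
        rw [hW.wordOp_single hb, List.append_nil, inner_smul_left, Complex.conj_ofReal,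
          lp.inner_single_left]
    _ = ⟪k, ((Real.sqrt (b [] / b α) : ℝ) : ℂ) • (h : ∀ _ : Word n, G) α⟫_ℂ :=
        (inner_smul_right _ _ _).symm

theorem IsWeightedShift.apply_mem_vacuumSpace [CompleteSpace G] (hW : IsWeightedShift b W)
    (hb : ∀ α, 0 < b α) {H : Submodule ℂ (FockK n G)} (hco : ∀ i, ∀ x ∈ H, (W i).adjoint x ∈ H)
    {h : FockK n G} (hh : h ∈ H) (α : Word n) : (h : ∀ _ : Word n, G) α ∈ vacuumSpace H := by
  have hmem : ((wordOp W α).adjoint h : ∀ _ : Word n, G) [] ∈ vacuumSpace H :=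
    ⟨_, adjoint_wordOp_mem hco α hh, rfl⟩
  rwa [hW.adjoint_wordOp_apply_nil hb, Submodule.smul_mem_iff _ (ofReal_sqrt_div_ne_zero hb _ _)]
    at hmem

theorem IsWeightedShift.eq_top_of_dense_span (hW : IsWeightedShift b W)
    {H : Submodule ℂ (FockK n G)}
    (hspan : Dense (Submodule.span ℂ (⋃ α, wordOp W α '' (H : Set (FockK n G))) :
      Set (FockK n G)))
    {N : Submodule ℂ G} (hN : IsClosed (N : Set G))
    (hHN : ∀ f ∈ H, ∀ α : Word n, (f : ∀ _ : Word n, G) α ∈ N) : N = ⊤ := by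
  have hspan_le :
      Submodule.span ℂ (⋃ α, wordOp W α '' (H : Set (FockK n G))) ≤ fockTensor n N := by
    rw [Submodule.span_le]
    rintro _ ⟨_, ⟨α, rfl⟩, f, hf, rfl⟩
    exact wordOp_mem (hW.map_mem_fockTensor hN) α (mem_fockTensor.2 (hHN f hf))
  have hclosure := closure_minimal hspan_le (isClosed_fockTensor hN)
  rw [hspan.closure_eq] at hclosure
  refine Submodule.eq_top_iff'.2 fun k => ?_
  simpa using mem_fockTensor.1 (hclosure (Set.mem_univ (lp.single 2 [] k))) []

theorem single_nil_mem_topologicalClosure_span [CompleteSpace G] {a : Word n → ℝ}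
    (hDelta : ∀ x : FockK n G, Tendsto (fun N : ℕ => deltaPartial a W N x) atTop
      (nhds (lp.single 2 ([] : Word n) ((x : ∀ _ : Word n, G) []))))
    {H : Submodule ℂ (FockK n G)} (hco : ∀ i, ∀ x ∈ H, (W i).adjoint x ∈ H) {h : FockK n G}
    (hh : h ∈ H) :
    lp.single 2 [] ((h : ∀ _ : Word n, G) []) ∈
      (Submodule.span ℂ (⋃ α, wordOp W α '' (H : Set (FockK n G)))).topologicalClosure := by
  refine (Submodule.isClosed_topologicalClosure _).mem_of_tendsto (hDelta h)
    (Eventually.of_forall fun N => Submodule.le_topologicalClosure _ ?_)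
  simp only [deltaPartial, sum_apply, smul_apply, ContinuousLinearMap.comp_apply]
  exact Submodule.sum_mem _ fun p _ => Submodule.sum_mem _ fun α _ => Submodule.smul_mem _ _
    (Submodule.subset_span (Set.mem_iUnion.2 ⟨α, _, adjoint_wordOp_mem hco α hh, rfl⟩))

theorem IsWeightedShift.dense_span_of_dense_vacuumSpace [CompleteSpace G]
    (hW : IsWeightedShift b W) (hb : ∀ α, 0 < b α) {a : Word n → ℝ}
    (hDelta : ∀ x : FockK n G, Tendsto (fun N : ℕ => deltaPartial a W N x) atTop
      (nhds (lp.single 2 ([] : Word n) ((x : ∀ _ : Word n, G) []))))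
    {H : Submodule ℂ (FockK n G)} (hco : ∀ i, ∀ x ∈ H, (W i).adjoint x ∈ H)
    (hV : Dense (vacuumSpace H : Set G)) :
    Dense (Submodule.span ℂ (⋃ α, wordOp W α '' (H : Set (FockK n G))) :
      Set (FockK n G)) := by
  set T := (Submodule.span ℂ (⋃ α, wordOp W α '' (H : Set (FockK n G)))).topologicalClosure
  have hT : IsClosed (T : Set (FockK n G)) := Submodule.isClosed_topologicalClosure _
  have hsingle_vacuum : ∀ α, ∀ v ∈ vacuumSpace H, lp.single 2 α v ∈ T := by
    rintro α _ ⟨h, hh, rfl⟩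
    have hmem := wordOp_mem_topologicalClosure_span W _ α
      (single_nil_mem_topologicalClosure_span hDelta hco hh)
    rwa [hW.wordOp_single hb, List.append_nil,
      Submodule.smul_mem_iff _ (ofReal_sqrt_div_ne_zero hb _ _)] at hmem
  have hsingle : ∀ α (k : G), lp.single 2 α k ∈ T := fun α =>
    hV.induction (hsingle_vacuum α) (hT.preimage (lp.isometry_single α).continuous)
  refine Submodule.dense_iff_topologicalClosure_eq_top.2 (Submodule.eq_top_iff'.2 fun f => ?_)
  exact lp.map_mem_of_forall_single_mem (by norm_num) (ContinuousLinearMap.id ℂ _) hT f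
    fun α => hsingle α _

end Fock

theorem minimality_equivalences_general
    {n : ℕ} {G : Type*} [NormedAddCommGroup G] [InnerProductSpace ℂ G] [CompleteSpace G]
    (b a : Word n → ℝ) (hb : ∀ α, 0 < b α)
    (W : Fin n → (FockK n G →L[ℂ] FockK n G))
    (hW : ∀ (i : Fin n) (α : Word n) (k : G),
      W i (lp.single 2 α k) =
        ((Real.sqrt (b α / b (i :: α)) : ℝ) : ℂ) • lp.single 2 (i :: α) k)
    (hDelta : ∀ x : FockK n G,
      Tendsto (fun N : ℕ => deltaPartial a W N x) atTop
        (nhds (lp.single 2 ([] : Word n) ((x : ∀ _ : Word n, G) []))))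
    (H : Submodule ℂ (FockK n G))
    (hco : ∀ i : Fin n, ∀ x ∈ H, (W i).adjoint x ∈ H) :
    (closure (↑(Submodule.span ℂ
        (⋃ α : Word n, wordOp W α '' (H : Set (FockK n G)))) : Set (FockK n G)) = Set.univ
      ↔ ∀ N : Submodule ℂ G, IsClosed (N : Set G) →
          (∀ f ∈ H, ∀ α : Word n, (f : ∀ _ : Word n, G) α ∈ N) → N = ⊤) ∧
    (closure (↑(Submodule.span ℂ
        (⋃ α : Word n, wordOp W α '' (H : Set (FockK n G)))) : Set (FockK n G)) = Set.univ
      ↔ closure ((fun f : FockK n G => (f : ∀ _ : Word n, G) []) '' (H : Set (FockK n G)))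
          = Set.univ) ∧
    (closure ((fun f : FockK n G => (f : ∀ _ : Word n, G) []) '' (H : Set (FockK n G)))
        = Set.univ
      ↔ ∀ k : G, (∀ h ∈ H, ⟪(lp.single 2 ([] : Word n) k : FockK n G), h⟫_ℂ = 0) → k = 0) := by
  have hW' : IsWeightedShift b W := hW
  have i_ii := fun hi N => hW'.eq_top_of_dense_span (H := H) (N := N) hi
  have ii_iii : (∀ N : Submodule ℂ G, IsClosed (N : Set G) →
      (∀ f ∈ H, ∀ α : Word n, (f : ∀ _ : Word n, G) α ∈ N) → N = ⊤) →
      Dense (vacuumSpace H : Set G) := fun hii => by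
    rw [Submodule.dense_iff_topologicalClosure_eq_top]
    exact hii _ (Submodule.isClosed_topologicalClosure _) fun f hf α =>
      Submodule.le_topologicalClosure _ (hW'.apply_mem_vacuumSpace hb hco hf α)
  have iii_i := hW'.dense_span_of_dense_vacuumSpace hb hDelta hco
  rw [show (fun f : FockK n G => (f : ∀ _ : Word n, G) []) '' (H : Set (FockK n G)) =
    vacuumSpace H from rfl]
  simp only [← dense_iff_closure_eq]
  exact ⟨⟨i_ii, fun hii => iii_i (ii_iii hii)⟩, ⟨fun hi => ii_iii (i_ii hi), iii_i⟩,
    dense_vacuumSpace_iff H⟩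

/-- For a co-invariant subspace `H ⊆ F²(H_n) ⊗ G` of the universal model of an
admissible `g`, the following are equivalent: (i) the closed span of `(W_α ⊗ I_G)H` is the whole
space; (ii) no proper closed subspace `N ⊆ G` satisfies `H ⊆ F²(H_n) ⊗ N`; (iii) the vacuum
components of `H` are dense in `G`; (iv) `H^⊥ ∩ G = {0}` (with `G` identified with `1 ⊗ G`). -/
theorem minimality_equivalences
    {n : ℕ} {G : Type*} [NormedAddCommGroup G] [InnerProductSpace ℂ G] [CompleteSpace G]
    (b a : Word n → ℝ) (hb : ∀ α, 0 < b α) (hb0 : b ([] : Word n) = 1)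
    (ha0 : a ([] : Word n) = 1)
    (hbd : ∃ C : ℝ, ∀ (i : Fin n) (α : Word n), b α / b (i :: α) ≤ C)
    (W : Fin n → (FockK n G →L[ℂ] FockK n G))
    (hW : ∀ (i : Fin n) (α : Word n) (k : G),
      W i (lp.single 2 α k) =
        ((Real.sqrt (b α / b (i :: α)) : ℝ) : ℂ) • lp.single 2 (i :: α) k)
    (hDelta : ∀ x : FockK n G,
      Tendsto (fun N : ℕ => deltaPartial a W N x) atTop
        (nhds (lp.single 2 ([] : Word n) ((x : ∀ _ : Word n, G) []))))
    (H : Submodule ℂ (FockK n G)) (hHcl : IsClosed (H : Set (FockK n G)))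
    (hco : ∀ i : Fin n, ∀ x ∈ H, (W i).adjoint x ∈ H) :
    (closure (↑(Submodule.span ℂ
        (⋃ α : Word n, wordOp W α '' (H : Set (FockK n G)))) : Set (FockK n G)) = Set.univ
      ↔ ∀ N : Submodule ℂ G, IsClosed (N : Set G) →
          (∀ f ∈ H, ∀ α : Word n, (f : ∀ _ : Word n, G) α ∈ N) → N = ⊤) ∧
    (closure (↑(Submodule.span ℂ
        (⋃ α : Word n, wordOp W α '' (H : Set (FockK n G)))) : Set (FockK n G)) = Set.univ
      ↔ closure ((fun f : FockK n G => (f : ∀ _ : Word n, G) []) '' (H : Set (FockK n G)))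
          = Set.univ) ∧
    (closure ((fun f : FockK n G => (f : ∀ _ : Word n, G) []) '' (H : Set (FockK n G)))
        = Set.univ
      ↔ ∀ k : G, (∀ h ∈ H, ⟪(lp.single 2 ([] : Word n) k : FockK n G), h⟫_ℂ = 0) → k = 0) :=
  minimality_equivalences_general b a hb W hW hDelta H hco
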